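/- (Harris-type positive correlation of latent and estimated quality.) For every μ, θ, θ̂ ∈ ℝ, σ_W > 0 and σ ≥ 0, with s = √(σ_W² + σ²), one has ∫_{ℝ²} 1{μ + σ_W z₁ ≥ θ} · 1{μ + σ_W z₁ + σ z₂ ≥ θ̂} φ(z₁) φ(z₂) dz₁ dz₂ > Φ^c((θ − μ)/σ_W) · Φ^c((θ̂ − μ)/s). (The events {W ≥ θ} and {Ŵ ≥ θ̂} are strictly positively correlated, where W = μ + σ_W Z₁ and Ŵ = W + σ Z₂ with Z₁, Z₂ independent standard normals.) -/
import Mathlib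


open MeasureTheory Set

/-- Standard normal density. -/
noncomputable def phi (t : ℝ) : ℝ := Real.exp (-t ^ 2 / 2) / Real.sqrt (2 * Real.pi)

/-- Standard normal CDF. -/
noncomputable def Phi (t : ℝ) : ℝ := ∫ u in Set.Iic t, phi u

/-- Standard normal complementary CDF. -/
noncomputable def Phic (t : ℝ) : ℝ := 1 - Phi t


lemma phi_pos (t : ℝ) : 0 < phi t :=
  div_pos (Real.exp_pos _) (Real.sqrt_pos.2 (by positivity))

lemma phi_nonneg (t : ℝ) : 0 ≤ phi t := (phi_pos t).le

lemma phi_continuous : Continuous phi := by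
  unfold phi; fun_prop

lemma phi_eq (t : ℝ) : phi t = Real.exp (-(1/2) * t ^ 2) / Real.sqrt (2 * Real.pi) := by
  unfold phi; ring_nf

lemma integrable_phi : Integrable phi := by
  have h := (integrable_exp_neg_mul_sq (by norm_num : (0:ℝ) < 1/2)).div_const
    (Real.sqrt (2 * Real.pi))
  refine h.congr ?_
  filter_upwards with t
  rw [phi_eq]

lemma integral_phi : ∫ t, phi t = 1 := by
  have h := integral_gaussian (1/2 : ℝ)
  have h2 : √(Real.pi / (1/2)) = Real.sqrt (2 * Real.pi) := by
    rw [div_div_eq_mul_div, div_one, mul_comm]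
  simp only [phi_eq]
  rw [integral_div, h, h2, div_self (by positivity)]

lemma Phic_eq (t : ℝ) : Phic t = ∫ x in Ioi t, phi x := by
  have h := intervalIntegral.integral_Iic_add_Ioi (b := t) (f := phi) (μ := volume)
    integrable_phi.integrableOn integrable_phi.integrableOn
  rw [integral_phi] at h
  unfold Phic Phi
  linarith

lemma setIntegral_phi_pos {s : Set ℝ} (hs : MeasurableSet s) (h : 0 < volume s) :
    0 < ∫ x in s, phi x := by
  rw [setIntegral_pos_iff_support_of_nonneg_ae
    (Filter.Eventually.of_forall phi_nonneg) integrable_phi.integrableOn]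
  have : Function.support phi = univ := by
    ext x; simp [Function.mem_support, (phi_pos x).ne']
  rw [this, univ_inter]; exact h

lemma Phic_pos (t : ℝ) : 0 < Phic t := by
  rw [Phic_eq]
  exact setIntegral_phi_pos measurableSet_Ioi (by simp)

lemma Phi_pos (t : ℝ) : 0 < Phi t := by
  unfold Phi
  exact setIntegral_phi_pos measurableSet_Iic (by simp)

lemma Phic_lt_one (t : ℝ) : Phic t < 1 := by
  have := Phi_pos t; unfold Phic; linarith

lemma Phic_nonneg (t : ℝ) : 0 ≤ Phic t := (Phic_pos t).le

lemma Phic_le_one (t : ℝ) : Phic t ≤ 1 := (Phic_lt_one t).le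

lemma Phic_strictAnti : StrictAnti Phic := by
  intro t t' htt'
  have hsplit : Ioi t = Ioc t t' ∪ Ioi t' := (Ioc_union_Ioi_eq_Ioi htt'.le).symm
  have hdisj : Disjoint (Ioc t t') (Ioi t') := by
    rw [Set.disjoint_left]
    rintro x ⟨_, h2⟩ h3; exact absurd h3 (not_lt.2 h2).elim
  rw [Phic_eq, Phic_eq, hsplit,
    setIntegral_union hdisj measurableSet_Ioi
      integrable_phi.integrableOn integrable_phi.integrableOn]
  have : 0 < ∫ x in Ioc t t', phi x :=
    setIntegral_phi_pos measurableSet_Ioc (by simp [htt'])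
  linarith

lemma Phic_anti : Antitone Phic := Phic_strictAnti.antitone

lemma Phic_measurable : Measurable Phic := Phic_anti.measurable

lemma setIntegral_comp_add_right_Ioi (g : ℝ → ℝ) (a d : ℝ) :
    ∫ x in Ioi a, g (x + d) = ∫ x in Ioi (a + d), g x := by
  rw [← integral_indicator measurableSet_Ioi, ← integral_indicator measurableSet_Ioi,
    ← integral_add_right_eq_self ((Ioi (a + d)).indicator g) d]
  congr 1; ext x
  have h : (a < x) = (a + d < x + d) := by
    apply propext; constructor <;> intro <;> linarith
  simp only [Set.indicator_apply, mem_Ioi, h]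

lemma integral_comp_affine_Ioi (g : ℝ → ℝ) (r e : ℝ) {k : ℝ} (hk : 0 < k) :
    ∫ u in Ioi r, g (k * u + e) = k⁻¹ * ∫ x in Ioi (k * r + e), g x := by
  calc ∫ u in Ioi r, g (k * u + e) = ∫ u in Ioi r, (fun x => g (x + e)) (k * u) := rfl
  _ = k⁻¹ • ∫ x in Ioi (k * r), (fun x => g (x + e)) x :=
      integral_comp_mul_left_Ioi (fun x => g (x + e)) r hk
  _ = k⁻¹ * ∫ x in Ioi (k * r + e), g x := by
      rw [setIntegral_comp_add_right_Ioi g (k * r) e, smul_eq_mul]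

lemma integral_comp_affine (g : ℝ → ℝ) (e : ℝ) {k : ℝ} (hk : 0 < k) :
    ∫ u, g (k * u + e) = k⁻¹ * ∫ x, g x := by
  calc ∫ u, g (k * u + e) = ∫ u, (fun x => g (x + e)) (k * u) := rfl
  _ = |k⁻¹| • ∫ x, (fun x => g (x + e)) x :=
      Measure.integral_comp_mul_left (fun x => g (x + e)) k
  _ = k⁻¹ * ∫ x, g x := by
      rw [integral_add_right_eq_self, smul_eq_mul, abs_of_pos (inv_pos.2 hk)]

lemma integrable_phi_affine {k : ℝ} (hk : k ≠ 0) (e : ℝ) :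
    Integrable (fun x => phi (k * x + e)) := by
  have h1 : Integrable (fun x => phi (x + e)) := by
    have := (measurePreserving_add_right volume e).integrable_comp
      (g := phi) phi_continuous.aestronglyMeasurable
    exact this.2 integrable_phi
  exact h1.comp_mul_left' hk

lemma phi_mul_phi (a b : ℝ) :
    phi a * phi b = Real.exp (-(a ^ 2 + b ^ 2) / 2) / (2 * Real.pi) := by
  unfold phi
  rw [div_mul_div_comm, ← Real.exp_add,
    Real.mul_self_sqrt (by positivity : (0:ℝ) ≤ 2 * Real.pi)]
  congr 1
  ring

lemma phi_symm {α β s : ℝ} (hβ : β ≠ 0) (hs : s ^ 2 = α ^ 2 + β ^ 2) (t u : ℝ) :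
    phi t * phi ((s * u - α * t) / β) = phi u * phi ((s * t - α * u) / β) := by
  rw [phi_mul_phi, phi_mul_phi]
  congr 2
  field_simp
  linear_combination (t ^ 2 - u ^ 2) * hs

lemma integrable_Phic_affine_mul_phi (c α β : ℝ) (hβ : β ≠ 0) :
    Integrable (fun t => Phic ((c - α * t) / β) * phi t) := by
  have hm : Measurable fun t : ℝ => Phic ((c - α * t) / β) :=
    Phic_measurable.comp (by fun_prop)
  refine Integrable.mono integrable_phi
    (hm.mul phi_continuous.measurable).aestronglyMeasurable ?_
  filter_upwards with t
  rw [Real.norm_eq_abs, Real.norm_eq_abs, abs_mul,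
    abs_of_nonneg (Phic_nonneg _), abs_of_nonneg (phi_nonneg _)]
  nlinarith [Phic_le_one ((c - α * t) / β), phi_pos t, Phic_nonneg ((c - α * t) / β)]

lemma phic_convolution {α β : ℝ} (hα : 0 < α) (hβ : 0 < β) (c : ℝ) :
    ∫ t, Phic ((c - α * t) / β) * phi t = Phic (c / Real.sqrt (α ^ 2 + β ^ 2)) := by
  set s := Real.sqrt (α ^ 2 + β ^ 2) with hs_def
  have hs2 : s ^ 2 = α ^ 2 + β ^ 2 := Real.sq_sqrt (by positivity)
  have hspos : 0 < s := Real.sqrt_pos.2 (by positivity)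
  have hk : 0 < s / β := div_pos hspos hβ
  set r := c / s with hr
  have e1 : ∀ t u : ℝ, (s / β) * u + (-(α * t) / β) = (s * u - α * t) / β := by
    intro t u; field_simp; ring
  have step1 : ∀ t : ℝ, Phic ((c - α * t) / β)
      = ∫ u in Ioi r, (s / β) * phi ((s * u - α * t) / β) := by
    intro t
    have h := integral_comp_affine_Ioi phi r (-(α * t) / β) hk
    have e2 : (s / β) * r + (-(α * t) / β) = (c - α * t) / β := by
      rw [hr]; field_simp; ring
    rw [e2] at h
    simp_rw [e1 t] at h
    rw [Phic_eq, integral_const_mul, h, ← mul_assoc, mul_inv_cancel₀ hk.ne', one_mul]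
  have hne : (fun t => Phic ((c - α * t) / β) * phi t)
      = fun t => ∫ u in Ioi r, (s / β) * phi ((s * u - α * t) / β) * phi t := by
    funext t
    rw [step1 t, ← integral_mul_const]
  have hFcont : Continuous fun p : ℝ × ℝ => (s / β) * phi ((s * p.2 - α * p.1) / β) * phi p.1 := by
    have hc1 : Continuous fun p : ℝ × ℝ => (s * p.2 - α * p.1) / β := by fun_prop
    exact ((continuous_const.mul (phi_continuous.comp hc1)).mul
      (phi_continuous.comp continuous_fst))
  have hFint : Integrable (fun p : ℝ × ℝ =>
      (s / β) * phi ((s * p.2 - α * p.1) / β) * phi p.1)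
      (volume.prod (volume.restrict (Ioi r))) := by
    rw [integrable_prod_iff hFcont.aestronglyMeasurable]
    constructor
    · filter_upwards with t
      have : Integrable (fun u => phi ((s * u - α * t) / β)) := by
        have h := integrable_phi_affine hk.ne' (-(α * t) / β)
        refine h.congr ?_
        filter_upwards with u
        rw [e1]
      exact ((this.const_mul _).mul_const _).restrict
    · have : (fun t : ℝ => ∫ u in Ioi r,
          ‖(s / β) * phi ((s * u - α * t) / β) * phi t‖)
          = fun t => Phic ((c - α * t) / β) * phi t := by
        funext t
        rw [congrFun hne t]
        congr 1
        funext u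
        rw [Real.norm_eq_abs, abs_of_nonneg]
        exact mul_nonneg (mul_nonneg hk.le (phi_nonneg _)) (phi_nonneg _)
      rw [this]
      exact integrable_Phic_affine_mul_phi c α β hβ.ne'
  calc ∫ t, Phic ((c - α * t) / β) * phi t
      = ∫ t, ∫ u in Ioi r, (s / β) * phi ((s * u - α * t) / β) * phi t := by rw [hne]
    _ = ∫ u in Ioi r, ∫ t, (s / β) * phi ((s * u - α * t) / β) * phi t :=
        integral_integral_swap (by exact hFint)
    _ = ∫ u in Ioi r, ∫ t, phi u * ((s / β) * phi ((s * t - α * u) / β)) := by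
        refine setIntegral_congr_fun measurableSet_Ioi fun u _ => ?_
        congr 1
        funext t
        have := phi_symm hβ.ne' hs2 t u
        calc (s / β) * phi ((s * u - α * t) / β) * phi t
            = (s / β) * (phi t * phi ((s * u - α * t) / β)) := by ring
          _ = (s / β) * (phi u * phi ((s * t - α * u) / β)) := by rw [this]
          _ = phi u * ((s / β) * phi ((s * t - α * u) / β)) := by ring
    _ = ∫ u in Ioi r, phi u := by
        refine setIntegral_congr_fun measurableSet_Ioi fun u _ => ?_
        rw [integral_const_mul, integral_const_mul]
        have h := integral_comp_affine phi (-(α * u) / β) hk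
        simp_rw [e1 u] at h
        rw [h, integral_phi, mul_one, mul_inv_cancel₀ hk.ne', mul_one]
    _ = Phic r := (Phic_eq r).symm

lemma phic_mul_phi_integrableOn (c α β : ℝ) (hβ : β ≠ 0) (S : Set ℝ) :
    IntegrableOn (fun t => Phic ((c - α * t) / β) * phi t) S :=
  (integrable_Phic_affine_mul_phi c α β hβ).integrableOn

lemma Phi_eq_Iio (a : ℝ) : Phi a = ∫ x in Iio a, phi x := by
  unfold Phi
  exact integral_Iic_eq_integral_Iio

lemma Phic_eq_Ici (a : ℝ) : Phic a = ∫ x in Ici a, phi x := by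
  rw [Phic_eq]
  exact integral_Ici_eq_integral_Ioi.symm

lemma strict_1d {a c γ σ : ℝ} (hγ : 0 < γ) (hσ : 0 < σ) :
    Phic a * ∫ z, Phic ((c - γ * z) / σ) * phi z
      < ∫ z in Ici a, Phic ((c - γ * z) / σ) * phi z := by
  set G : ℝ → ℝ := fun z => Phic ((c - γ * z) / σ) with hG
  have hGanti : ∀ z z' : ℝ, z ≤ z' → G z ≤ G z' := by
    intro z z' h
    refine Phic_anti ?_
    have hnum : c - γ * z' ≤ c - γ * z := by nlinarith
    gcongr
  have hGlt : G a < G (a + 1) := by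
    apply Phic_strictAnti
    rw [div_lt_div_iff₀ hσ hσ]
    nlinarith
  have hGpos : ∀ z, 0 < G z := fun z => Phic_pos _
  have hGle : ∀ z, G z ≤ 1 := fun z => Phic_le_one _
  have hint : ∀ S : Set ℝ, IntegrableOn (fun z => G z * phi z) S :=
    fun S => phic_mul_phi_integrableOn c γ σ hσ.ne' S
  -- split full integral
  have hsplit1 : (∫ z in Iio a, G z * phi z) + (∫ z in Ici a, G z * phi z)
      = ∫ z, G z * phi z :=
    intervalIntegral.integral_Iio_add_Ici (hint _) (hint _)
  -- split Ici a at a+1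
  have hdisj : Disjoint (Ico a (a + 1)) (Ici (a + 1)) := by
    rw [Set.disjoint_left]
    rintro x ⟨_, h2⟩ h3
    exact absurd h3 (not_le.2 h2)
  have hsplit2 : (∫ z in Ico a (a + 1), G z * phi z) + (∫ z in Ici (a + 1), G z * phi z)
      = ∫ z in Ici a, G z * phi z := by
    rw [← setIntegral_union hdisj measurableSet_Ici (hint _) (hint _),
      Ico_union_Ici_eq_Ici (by linarith : a ≤ a + 1)]
  have hsplit3 : (∫ z in Ico a (a + 1), phi z) + (∫ z in Ici (a + 1), phi z)
      = ∫ z in Ici a, phi z := by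
    rw [← setIntegral_union hdisj measurableSet_Ici
      integrable_phi.integrableOn integrable_phi.integrableOn,
      Ico_union_Ici_eq_Ici (by linarith : a ≤ a + 1)]
  -- lower bounds on pieces of T
  have hB1 : G a * ∫ z in Ico a (a + 1), phi z ≤ ∫ z in Ico a (a + 1), G z * phi z := by
    rw [← integral_const_mul]
    refine setIntegral_mono_on ((integrable_phi.const_mul _).integrableOn) (hint _)
      measurableSet_Ico fun z hz => ?_
    exact mul_le_mul_of_nonneg_right (hGanti a z hz.1) (phi_nonneg z)
  have hB2 : G (a + 1) * ∫ z in Ici (a + 1), phi z ≤ ∫ z in Ici (a + 1), G z * phi z := by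
    rw [← integral_const_mul]
    refine setIntegral_mono_on ((integrable_phi.const_mul _).integrableOn) (hint _)
      measurableSet_Ici fun z hz => ?_
    exact mul_le_mul_of_nonneg_right (hGanti (a + 1) z hz) (phi_nonneg z)
  -- upper bound on L
  have hL : (∫ z in Iio a, G z * phi z) ≤ G a * ∫ z in Iio a, phi z := by
    rw [← integral_const_mul]
    refine setIntegral_mono_on (hint _) ((integrable_phi.const_mul _).integrableOn)
      measurableSet_Iio fun z hz => ?_
    exact mul_le_mul_of_nonneg_right (hGanti z a (le_of_lt hz)) (phi_nonneg z)
  have hPhi : Phi a = ∫ z in Iio a, phi z := Phi_eq_Iio a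
  have hPhic : Phic a = ∫ z in Ici a, phi z := Phic_eq_Ici a
  have hPhic1 : Phic (a + 1) = ∫ z in Ici (a + 1), phi z := Phic_eq_Ici (a + 1)
  have hPhicpos : 0 < Phic a := Phic_pos a
  have hPhipos : 0 < Phi a := Phi_pos a
  have hPhic1pos : 0 < Phic (a + 1) := Phic_pos (a + 1)
  have hsum : Phi a + Phic a = 1 := by unfold Phic; ring
  -- assemble
  rw [← hsplit1, ← hsplit2]
  rw [← hPhi] at hL
  rw [← hPhic1] at hB2
  have h3 : (∫ z in Ico a (a + 1), phi z) + Phic (a + 1) = Phic a := by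
    rw [hPhic1, hPhic]; exact hsplit3
  have h1 : Phic a * (∫ z in Iio a, G z * phi z) ≤ Phic a * (G a * Phi a) :=
    mul_le_mul_of_nonneg_left hL hPhicpos.le
  have h2 : Phi a * (G a * (∫ z in Ico a (a + 1), phi z) + G (a + 1) * Phic (a + 1))
      ≤ Phi a * ((∫ z in Ico a (a + 1), G z * phi z) + ∫ z in Ici (a + 1), G z * phi z) :=
    mul_le_mul_of_nonneg_left (add_le_add hB1 hB2) hPhipos.le
  have h4 : 0 < Phi a * ((G (a + 1) - G a) * Phic (a + 1)) :=
    mul_pos hPhipos (mul_pos (sub_pos.2 hGlt) hPhic1pos)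
  have h5 : Phi a * (G a * (∫ z in Ico a (a + 1), phi z) + G (a + 1) * Phic (a + 1))
      = Phic a * (G a * Phi a) + Phi a * ((G (a + 1) - G a) * Phic (a + 1)) := by
    linear_combination (Phi a * G a) * h3
  have h6 : (Phi a + Phic a) * ((∫ z in Ico a (a + 1), G z * phi z)
        + ∫ z in Ici (a + 1), G z * phi z)
      = (∫ z in Ico a (a + 1), G z * phi z) + ∫ z in Ici (a + 1), G z * phi z := by
    rw [hsum, one_mul]
  nlinarith [h1, h2, h4, h5, h6]

lemma Phic_mul_Phic_lt_max (a b : ℝ) : Phic a * Phic b < Phic (max a b) := by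
  rcases le_total a b with h | h
  · rw [max_eq_right h]
    calc Phic a * Phic b < 1 * Phic b :=
          mul_lt_mul_of_pos_right (Phic_lt_one a) (Phic_pos b)
      _ = Phic b := one_mul _
  · rw [max_eq_left h]
    calc Phic a * Phic b < Phic a * 1 :=
          mul_lt_mul_of_pos_left (Phic_lt_one b) (Phic_pos a)
      _ = Phic a := mul_one _

theorem harris_positive_correlation'
    (μ θ θhat σW σ : ℝ) (hσW : 0 < σW) (hσ : 0 ≤ σ) :
    Phic ((θ - μ) / σW) * Phic ((θhat - μ) / Real.sqrt (σW ^ 2 + σ ^ 2))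
    < ∫ z : ℝ × ℝ,
        (if θ ≤ μ + σW * z.1 then (1 : ℝ) else 0)
          * (if θhat ≤ μ + σW * z.1 + σ * z.2 then (1 : ℝ) else 0)
          * phi z.1 * phi z.2 := by
  set a := (θ - μ) / σW with ha
  set c := θhat - μ with hc
  set f : ℝ × ℝ → ℝ := fun z =>
    (if θ ≤ μ + σW * z.1 then (1 : ℝ) else 0)
      * (if θhat ≤ μ + σW * z.1 + σ * z.2 then (1 : ℝ) else 0)
      * phi z.1 * phi z.2 with hf
  -- measurability
  have m1 : Measurable fun z : ℝ × ℝ => (if θ ≤ μ + σW * z.1 then (1 : ℝ) else 0) :=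
    Measurable.ite (measurableSet_le measurable_const (by fun_prop))
      measurable_const measurable_const
  have m2 : Measurable fun z : ℝ × ℝ => (if θhat ≤ μ + σW * z.1 + σ * z.2 then (1 : ℝ) else 0) :=
    Measurable.ite (measurableSet_le measurable_const (by fun_prop))
      measurable_const measurable_const
  have hmeas : Measurable f :=
    ((m1.mul m2).mul (phi_continuous.measurable.comp measurable_fst)).mul
      (phi_continuous.measurable.comp measurable_snd)
  -- integrability
  have hprod : Integrable (fun z : ℝ × ℝ => phi z.1 * phi z.2)
      ((volume : Measure ℝ).prod volume) := integrable_phi.mul_prod integrable_phi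
  have hfint : Integrable f ((volume : Measure ℝ).prod volume) := by
    refine hprod.mono hmeas.aestronglyMeasurable ?_
    filter_upwards with z
    rw [hf, Real.norm_eq_abs, Real.norm_eq_abs]
    have h1 : (0:ℝ) ≤ (if θ ≤ μ + σW * z.1 then (1 : ℝ) else 0) := by positivity
    have h2 : (if θ ≤ μ + σW * z.1 then (1 : ℝ) else 0) ≤ 1 := by split <;> norm_num
    have h3 : (0:ℝ) ≤ (if θhat ≤ μ + σW * z.1 + σ * z.2 then (1 : ℝ) else 0) := by positivity
    have h4 : (if θhat ≤ μ + σW * z.1 + σ * z.2 then (1 : ℝ) else 0) ≤ 1 := by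
      split <;> norm_num
    have hp1 := phi_nonneg z.1
    have hp2 := phi_nonneg z.2
    have h12 : (if θ ≤ μ + σW * z.1 then (1 : ℝ) else 0)
        * (if θhat ≤ μ + σW * z.1 + σ * z.2 then (1 : ℝ) else 0) ≤ 1 := by
      split <;> split <;> norm_num
    have h12n : (0:ℝ) ≤ (if θ ≤ μ + σW * z.1 then (1 : ℝ) else 0)
        * (if θhat ≤ μ + σW * z.1 + σ * z.2 then (1 : ℝ) else 0) := mul_nonneg h1 h3
    rw [abs_of_nonneg (by positivity : (0:ℝ) ≤ phi z.1 * phi z.2),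
      abs_of_nonneg (by positivity)]
    calc (if θ ≤ μ + σW * z.1 then (1 : ℝ) else 0)
          * (if θhat ≤ μ + σW * z.1 + σ * z.2 then (1 : ℝ) else 0) * phi z.1 * phi z.2
        = ((if θ ≤ μ + σW * z.1 then (1 : ℝ) else 0)
          * (if θhat ≤ μ + σW * z.1 + σ * z.2 then (1 : ℝ) else 0)) * (phi z.1 * phi z.2) := by
          ring
      _ ≤ 1 * (phi z.1 * phi z.2) :=
          mul_le_mul_of_nonneg_right h12 (by positivity)
      _ = phi z.1 * phi z.2 := one_mul _
  -- Fubini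
  have hfub : ∫ z : ℝ × ℝ, f z
      = ∫ z1, ∫ z2, f (z1, z2) := by
    rw [Measure.volume_eq_prod]
    exact integral_prod f hfint
  have hiff1 : ∀ z1 : ℝ, (θ ≤ μ + σW * z1) ↔ a ≤ z1 := by
    intro z1
    rw [ha, div_le_iff₀ hσW]
    constructor <;> intro <;> nlinarith
  rw [hfub]
  rcases eq_or_lt_of_le hσ with hσ0 | hσpos
  · -- degenerate case σ = 0
    subst hσ0
    have hsqrt : Real.sqrt (σW ^ 2 + 0 ^ 2) = σW := by
      rw [show σW ^ 2 + 0 ^ 2 = σW ^ 2 by ring, Real.sqrt_sq hσW.le]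
    set b := (θhat - μ) / σW with hb
    have hiff2 : ∀ z1 : ℝ, (θhat ≤ μ + σW * z1) ↔ b ≤ z1 := by
      intro z1
      rw [hb, div_le_iff₀ hσW]
      constructor <;> intro <;> nlinarith
    have hinner : ∀ z1 : ℝ, (∫ z2, f (z1, z2))
        = (Ici (max a b)).indicator phi z1 := by
      intro z1
      have hfe : ∀ z2 : ℝ, f (z1, z2)
          = ((if θ ≤ μ + σW * z1 then (1:ℝ) else 0)
            * (if θhat ≤ μ + σW * z1 then (1:ℝ) else 0) * phi z1) * phi z2 := by
        intro z2
        simp only [hf, zero_mul, add_zero]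
        try ring
      simp_rw [hfe]
      rw [integral_const_mul, integral_phi, mul_one, Set.indicator_apply]
      have hmax : z1 ∈ Ici (max a b) ↔ (a ≤ z1 ∧ b ≤ z1) := by
        rw [mem_Ici, max_le_iff]
      by_cases h1 : a ≤ z1 <;> by_cases h2 : b ≤ z1
      · rw [if_pos ((hiff1 z1).2 h1), if_pos ((hiff2 z1).2 h2),
          if_pos (hmax.2 ⟨h1, h2⟩)]
        ring
      · rw [if_neg (fun hh => h2 ((hiff2 z1).1 hh)),
          if_neg (fun hh => h2 (hmax.1 hh).2)]
        ring
      · rw [if_neg (fun hh => h1 ((hiff1 z1).1 hh)),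
          if_neg (fun hh => h1 (hmax.1 hh).1)]
        ring
      · rw [if_neg (fun hh => h1 ((hiff1 z1).1 hh)),
          if_neg (fun hh => h1 (hmax.1 hh).1)]
        ring
    simp_rw [hinner]
    rw [integral_indicator measurableSet_Ici, ← Phic_eq_Ici, hsqrt]
    exact Phic_mul_Phic_lt_max a b
  · -- main case σ > 0
    have hinner : ∀ z1 : ℝ, (∫ z2, f (z1, z2))
        = (if θ ≤ μ + σW * z1 then (1:ℝ) else 0) * phi z1
            * Phic ((c - σW * z1) / σ) := by
      intro z1
      have hfe : ∀ z2 : ℝ, f (z1, z2)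
          = ((if θ ≤ μ + σW * z1 then (1:ℝ) else 0) * phi z1)
            * ((if θhat ≤ μ + σW * z1 + σ * z2 then (1:ℝ) else 0) * phi z2) := by
        intro z2
        simp only [hf]
        ring
      simp_rw [hfe]
      rw [integral_const_mul]
      have hiff2 : ∀ z2 : ℝ, (θhat ≤ μ + σW * z1 + σ * z2) ↔ (c - σW * z1) / σ ≤ z2 := by
        intro z2
        rw [hc, div_le_iff₀ hσpos]
        constructor <;> intro <;> nlinarith
      have : (fun z2 : ℝ => (if θhat ≤ μ + σW * z1 + σ * z2 then (1:ℝ) else 0) * phi z2)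
          = (Ici ((c - σW * z1) / σ)).indicator phi := by
        funext z2
        rw [Set.indicator_apply]
        by_cases h : (c - σW * z1) / σ ≤ z2
        · rw [if_pos ((hiff2 z2).2 h), if_pos (mem_Ici.2 h), one_mul]
        · rw [if_neg (fun hh => h ((hiff2 z2).1 hh)),
            if_neg (fun hh => h (mem_Ici.1 hh)), zero_mul]
      rw [this, integral_indicator measurableSet_Ici, ← Phic_eq_Ici]
    simp_rw [hinner]
    have hout : (fun z1 => (if θ ≤ μ + σW * z1 then (1:ℝ) else 0) * phi z1
          * Phic ((c - σW * z1) / σ))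
        = (Ici a).indicator (fun z1 => Phic ((c - σW * z1) / σ) * phi z1) := by
      funext z1
      rw [Set.indicator_apply]
      by_cases h : a ≤ z1
      · rw [if_pos ((hiff1 z1).2 h), if_pos (mem_Ici.2 h)]
        ring
      · rw [if_neg (fun hh => h ((hiff1 z1).1 hh)), if_neg (fun hh => h (mem_Ici.1 hh))]
        ring
    rw [hout, integral_indicator measurableSet_Ici,
      ← phic_convolution hσW hσpos c]
    exact strict_1d hσW hσpos


/-- Harris-type strict positive correlation of the events `{W ≥ θ}` and
`{Ŵ ≥ θ̂}`, where `W = μ + σ_W Z₁` and `Ŵ = W + σ Z₂`. -/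
theorem harris_positive_correlation
    (μ θ θhat σW σ : ℝ) (hσW : 0 < σW) (hσ : 0 ≤ σ) :
    Phic ((θ - μ) / σW) * Phic ((θhat - μ) / Real.sqrt (σW ^ 2 + σ ^ 2))
    < ∫ z : ℝ × ℝ,
        (if θ ≤ μ + σW * z.1 then (1 : ℝ) else 0)
          * (if θhat ≤ μ + σW * z.1 + σ * z.2 then (1 : ℝ) else 0)
          * phi z.1 * phi z.2 := by
  exact harris_positive_correlation' μ θ θhat σW σ hσW hσ
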